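/- arXiv:2404.18836 — 3 statements merged into one kernel-verified Lean document; each statement's English description precedes it below -/
import Mathlib

section
/- Let X, X_ε be Banach spaces with operators E_ε : X → X_ε, and let T_ε : X_ε → X_ε, T : X → X be bounded linear operators such that T_ε converges compactly to T (meaning: whenever ‖u_ε‖_{X_ε} is bounded, the family (T_ε u_ε) has an E-convergent subsequence, and T_ε u_ε E-converges to T u whenever u_ε E-converges to u). Suppose I + T is injective with bounded inverse on X and ‖E_ε u‖_{X_ε} → ‖u‖_X for all u. Then there exist ε₁ > 0 and M > 0 such that for all ε ∈ (0, ε₁], I + T_ε is invertible and ‖(I + T_ε)^{-1}‖_{L(X_ε)} ≤ M. -/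
/-!
Two contradiction arguments along sequences `εₙ → 0`. If `I + T_ε` were not uniformly bounded
below, there would be unit vectors `uₙ` with `(I + T_{εₙ}) uₙ → 0`; by compact convergence a
subsequence of `T_{εₙ} uₙ` E-converges to some `w`, hence `uₙ` E-converges to `-w`, and
`w + T w = 0` forces `w = 0`, contradicting `‖uₙ‖ = 1` since `‖E_ε v‖ → ‖v‖`. The lower bound
makes the ranges closed; if they were proper, Riesz's lemma would give bounded `fₙ` at distance
`≥ 1` from them, while for `T_{εₙ} fₙ → w` and `z + T z = -w` the vectors
`(I + T_{εₙ})(fₙ + E_{εₙ} z)` approach `fₙ`. A bounded-below surjection has inverse of norm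
`≤ c⁻¹`.
-/

open Filter Topology Function

section BoundedBelow

variable {F G : Type*} [NormedAddCommGroup F] [NormedSpace ℝ F]
  [NormedAddCommGroup G] [NormedSpace ℝ G]

theorem exists_norm_eq_one_norm_apply_lt (A : F →L[ℝ] G) {c : ℝ} {u : F}
    (h : ‖A u‖ < c * ‖u‖) : ∃ v : F, ‖v‖ = 1 ∧ ‖A v‖ < c := by
  have hu : u ≠ 0 := by
    rintro rfl
    simp at h
  have hpos : 0 < ‖u‖ := norm_pos_iff.2 hu
  refine ⟨‖u‖⁻¹ • u, norm_smul_inv_norm hu, ?_⟩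
  rw [map_smul, norm_smul, norm_inv, norm_norm, inv_mul_lt_iff₀ hpos, mul_comm]
  exact h

theorem antilipschitzWith_of_mul_norm_le (A : F →L[ℝ] G) {c : ℝ} (hc : 0 < c)
    (hA : ∀ u, c * ‖u‖ ≤ ‖A u‖) : AntilipschitzWith (Real.toNNReal c⁻¹) A :=
  A.antilipschitz_of_bound fun u => by
    rw [Real.coe_toNNReal _ (inv_nonneg.2 hc.le), le_inv_mul_iff₀ hc]
    exact hA u

theorem exists_norm_le_forall_one_le_norm_sub_apply [CompleteSpace F] (A : F →L[ℝ] G)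
    {c : ℝ} (hc : 0 < c) (hA : ∀ u, c * ‖u‖ ≤ ‖A u‖) (hA_surj : ¬ Surjective A) :
    ∃ f : G, ‖f‖ ≤ 3 ∧ ∀ y, 1 ≤ ‖f - A y‖ := by
  have hclosed : IsClosed (LinearMap.range (A : F →ₗ[ℝ] G) : Set G) := by
    rw [LinearMap.coe_range]
    exact (antilipschitzWith_of_mul_norm_le A hc hA).isClosed_range A.uniformContinuous
  have hproper : ∃ f, f ∉ LinearMap.range (A : F →ₗ[ℝ] G) := by
    simpa [Surjective] using hA_surj
  obtain ⟨f, hf, hfar⟩ := riesz_lemma_of_norm_lt (c := (2 : ℝ)) (by norm_num) (R := 3)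
    (by norm_num) hclosed hproper
  exact ⟨f, hf, fun y => hfar _ (LinearMap.mem_range_self _ y)⟩

theorem exists_inverse_of_mul_norm_le_of_surjective (A : F →L[ℝ] G) {c : ℝ} (hc : 0 < c)
    (hA : ∀ u, c * ‖u‖ ≤ ‖A u‖) (hA_surj : Surjective A) :
    ∃ S : G →L[ℝ] F, (∀ x, S (A x) = x) ∧ (∀ x, A (S x) = x) ∧ ‖S‖ ≤ c⁻¹ := by
  let e := LinearEquiv.ofBijective (A : F →ₗ[ℝ] G)
    ⟨(antilipschitzWith_of_mul_norm_le A hc hA).injective, hA_surj⟩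
  have hbound : ∀ x, ‖e.symm x‖ ≤ c⁻¹ * ‖x‖ := fun x => by
    rw [le_inv_mul_iff₀ hc]
    have h := hA (e.symm x)
    rwa [show A (e.symm x) = x from e.apply_symm_apply x] at h
  refine ⟨LinearMap.mkContinuous e.symm c⁻¹ hbound, e.symm_apply_apply, e.apply_symm_apply,
    LinearMap.mkContinuous_norm_le _ (inv_nonneg.2 hc.le) _⟩

end BoundedBelow

theorem exists_seq_tendsto_zero_of_frequently_nhdsGT {Q : ℕ → ℝ → Prop}
    (h : ∀ n, ∃ᶠ ε in 𝓝[>] (0 : ℝ), Q n ε) :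
    ∃ e : ℕ → ℝ, Tendsto e atTop (𝓝 0) ∧ ∀ n, 0 < e n ∧ Q n (e n) := by
  have hsmall : ∀ n : ℕ, ∃ ε, Q n ε ∧ ε ∈ Set.Ioo (0 : ℝ) (1 / (n + 1)) := fun n =>
    ((h n).and_eventually (Ioo_mem_nhdsGT (by positivity))).exists
  choose e hQ he using hsmall
  exact ⟨e, squeeze_zero (fun n => (he n).1.le) (fun n => (he n).2.le)
    tendsto_one_div_add_atTop_nhds_zero_nat, fun n => ⟨(he n).1, hQ n⟩⟩

section CompactConvergence

variable {X : Type*} [NormedAddCommGroup X] [NormedSpace ℝ X]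
  {Xε : ℝ → Type*} [∀ ε, NormedAddCommGroup (Xε ε)] [∀ ε, NormedSpace ℝ (Xε ε)]

def EConverges (E : ∀ ε, X →L[ℝ] Xε ε) (e : ℕ → ℝ) (u : ∀ n, Xε (e n)) (v : X) : Prop :=
  Tendsto (fun n => ‖u n - E (e n) v‖) atTop (𝓝 0)

section EConverges

variable {E : ∀ ε, X →L[ℝ] Xε ε} {e : ℕ → ℝ} {u u' : ∀ n, Xε (e n)} {v v' : X}

theorem econverges_const : EConverges E e (fun n => E (e n) v) v := by
  simp [EConverges]

theorem econverges_zero_iff : EConverges E e u 0 ↔ Tendsto (fun n => ‖u n‖) atTop (𝓝 0) := by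
  simp [EConverges]

namespace EConverges

theorem add (hu : EConverges E e u v) (hu' : EConverges E e u' v') :
    EConverges E e (fun n => u n + u' n) (v + v') := by
  refine squeeze_zero (fun n => norm_nonneg _) (fun n => ?_) (by simpa using Tendsto.add hu hu')
  rw [map_add, add_sub_add_comm]
  exact norm_add_le _ _

theorem neg (hu : EConverges E e u v) : EConverges E e (fun n => -u n) (-v) := by
  simpa only [EConverges, map_neg, neg_sub_neg, norm_sub_rev] using hu

theorem sub (hu : EConverges E e u v) (hu' : EConverges E e u' v') :
    EConverges E e (fun n => u n - u' n) (v - v') := by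
  simpa only [sub_eq_add_neg] using hu.add hu'.neg

theorem tendsto_norm (hE : ∀ v : X, Tendsto (fun ε => ‖E ε v‖) (𝓝[>] 0) (𝓝 ‖v‖))
    (he : Tendsto e atTop (𝓝[>] 0)) (hu : EConverges E e u v) :
    Tendsto (fun n => ‖u n‖) atTop (𝓝 ‖v‖) := by
  have hdiff : Tendsto (fun n => ‖u n‖ - ‖E (e n) v‖) atTop (𝓝 0) :=
    squeeze_zero_norm (fun n => abs_norm_sub_norm_le _ _) hu
  simpa using hdiff.add ((hE v).comp he)

theorem unique (hE : ∀ v : X, Tendsto (fun ε => ‖E ε v‖) (𝓝[>] 0) (𝓝 ‖v‖))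
    (he : Tendsto e atTop (𝓝[>] 0)) (hu : EConverges E e u v) (hu' : EConverges E e u v') :
    v = v' := by
  have h := (hu.sub hu').tendsto_norm hE he
  simp only [sub_self, norm_zero] at h
  exact sub_eq_zero.1 (norm_eq_zero.1 (tendsto_nhds_unique tendsto_const_nhds h).symm)

end EConverges

end EConverges

def CompactlyConverges (ε₀ : ℝ) (E : ∀ ε, X →L[ℝ] Xε ε) (Tε : ∀ ε, Xε ε →L[ℝ] Xε ε)
    (T : X →L[ℝ] X) : Prop :=
  (∀ e : ℕ → ℝ, (∀ n, e n ∈ Set.Ioc 0 ε₀) → Tendsto e atTop (𝓝 0) →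
    ∀ (u : ∀ n, Xε (e n)) (M : ℝ), (∀ n, ‖u n‖ ≤ M) →
      ∃ (φ : ℕ → ℕ) (v : X), StrictMono φ ∧
        EConverges E (e ∘ φ) (fun n => Tε (e (φ n)) (u (φ n))) v) ∧
  (∀ e : ℕ → ℝ, (∀ n, e n ∈ Set.Ioc 0 ε₀) → Tendsto e atTop (𝓝 0) →
    ∀ (u : ∀ n, Xε (e n)) (v : X),
      EConverges E e u v → EConverges E e (fun n => Tε (e n) (u n)) (T v))

namespace CompactlyConverges

variable {ε₀ : ℝ} {E : ∀ ε, X →L[ℝ] Xε ε} {Tε : ∀ ε, Xε ε →L[ℝ] Xε ε} {T : X →L[ℝ] X}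

theorem not_tendsto_norm_apply_zero (hT : CompactlyConverges ε₀ E Tε T)
    (hE : ∀ v : X, Tendsto (fun ε => ‖E ε v‖) (𝓝[>] 0) (𝓝 ‖v‖))
    (hinj : Injective (ContinuousLinearMap.id ℝ X + T))
    {e : ℕ → ℝ} (he : ∀ n, e n ∈ Set.Ioc 0 ε₀) (he0 : Tendsto e atTop (𝓝 0))
    (u : ∀ n, Xε (e n)) (hu : ∀ n, ‖u n‖ = 1) :
    ¬ Tendsto (fun n => ‖(ContinuousLinearMap.id ℝ (Xε (e n)) + Tε (e n)) (u n)‖) atTop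
      (𝓝 0) := by
  intro hAu
  obtain ⟨φ, w, hφ, hTu⟩ := hT.1 e he he0 u 1 fun n => (hu n).le
  have heφ : Tendsto (e ∘ φ) atTop (𝓝 0) := he0.comp hφ.tendsto_atTop
  have heφ' : Tendsto (e ∘ φ) atTop (𝓝[>] 0) :=
    tendsto_nhdsWithin_iff.2 ⟨heφ, Eventually.of_forall fun n => (he (φ n)).1⟩
  have huφ : EConverges E (e ∘ φ) (fun n => u (φ n)) (-w) := by
    have h := (econverges_zero_iff.2 (hAu.comp hφ.tendsto_atTop)).sub hTu
    simp only [add_apply, ContinuousLinearMap.id_apply, add_sub_cancel_right, zero_sub] at h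
    exact h
  have hTw : T (-w) = w := (hT.2 _ (fun n => he (φ n)) heφ _ _ huφ).unique hE heφ' hTu
  have hw : w = 0 := hinj (by simpa [eq_neg_iff_add_eq_zero] using hTw.symm)
  have h := huφ.tendsto_norm hE heφ'
  simp [hu, hw] at h

theorem exists_eventually_mul_norm_le (hT : CompactlyConverges ε₀ E Tε T) (hε₀ : 0 < ε₀)
    (hE : ∀ v : X, Tendsto (fun ε => ‖E ε v‖) (𝓝[>] 0) (𝓝 ‖v‖))
    (hinj : Injective (ContinuousLinearMap.id ℝ X + T)) :
    ∃ c > (0 : ℝ), ∀ᶠ ε in 𝓝[>] 0,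
      ∀ u : Xε ε, c * ‖u‖ ≤ ‖(ContinuousLinearMap.id ℝ (Xε ε) + Tε ε) u‖ := by
  by_contra! h
  have hfreq : ∀ n : ℕ, ∃ᶠ ε in 𝓝[>] 0, ε ≤ ε₀ ∧
      ∃ u : Xε ε, ‖u‖ = 1 ∧ ‖(ContinuousLinearMap.id ℝ (Xε ε) + Tε ε) u‖ < 1 / (n + 1) :=
    fun n => ((h _ (by positivity)).and_eventually (Ioc_mem_nhdsGT hε₀)).mono
      fun ε ⟨⟨u, hu⟩, hε⟩ => ⟨hε.2, exists_norm_eq_one_norm_apply_lt _ hu⟩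
  obtain ⟨e, he0, he⟩ := exists_seq_tendsto_zero_of_frequently_nhdsGT hfreq
  choose hpos hle u hu hAu using he
  exact hT.not_tendsto_norm_apply_zero hE hinj (fun n => ⟨hpos n, hle n⟩) he0 u hu
    (squeeze_zero (fun n => norm_nonneg _) (fun n => (hAu n).le)
      tendsto_one_div_add_atTop_nhds_zero_nat)

theorem exists_norm_sub_apply_lt_one (hT : CompactlyConverges ε₀ E Tε T)
    (hsurj : Surjective (ContinuousLinearMap.id ℝ X + T))
    {e : ℕ → ℝ} (he : ∀ n, e n ∈ Set.Ioc 0 ε₀) (he0 : Tendsto e atTop (𝓝 0))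
    (f : ∀ n, Xε (e n)) {M : ℝ} (hf : ∀ n, ‖f n‖ ≤ M) :
    ∃ n, ∃ y, ‖f n - (ContinuousLinearMap.id ℝ (Xε (e n)) + Tε (e n)) y‖ < 1 := by
  obtain ⟨φ, w, hφ, hTf⟩ := hT.1 e he he0 f M hf
  obtain ⟨z, hz⟩ := hsurj (-w)
  have hTz : EConverges E (e ∘ φ) (fun n => Tε (e (φ n)) (E (e (φ n)) z)) (T z) :=
    hT.2 _ (fun n => he (φ n)) (he0.comp hφ.tendsto_atTop) _ z econverges_const
  have hlim : -(w + T z + z) = 0 := by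
    rw [← neg_eq_zero, neg_neg, ← neg_add_cancel w, ← hz]
    simp only [add_apply, ContinuousLinearMap.id_apply]
    abel
  have h := ((hTf.add hTz).add (econverges_const (v := z))).neg
  rw [hlim, econverges_zero_iff] at h
  obtain ⟨n, hn⟩ := (h.eventually (gt_mem_nhds one_pos)).exists
  refine ⟨φ n, f (φ n) + E (e (φ n)) z, (congrArg norm ?_).trans_lt hn⟩
  simp only [add_apply, ContinuousLinearMap.id_apply, map_add, Function.comp_apply]
  abel

theorem eventually_surjective [∀ ε, CompleteSpace (Xε ε)] (hT : CompactlyConverges ε₀ E Tε T)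
    (hε₀ : 0 < ε₀) (hsurj : Surjective (ContinuousLinearMap.id ℝ X + T)) {c : ℝ} (hc : 0 < c)
    (hlow : ∀ᶠ ε in 𝓝[>] 0, ∀ u : Xε ε, c * ‖u‖ ≤ ‖(ContinuousLinearMap.id ℝ (Xε ε) + Tε ε) u‖) :
    ∀ᶠ ε in 𝓝[>] 0, Surjective (ContinuousLinearMap.id ℝ (Xε ε) + Tε ε) := by
  by_contra h
  have hfreq : ∀ _ : ℕ, ∃ᶠ ε in 𝓝[>] 0, ε ≤ ε₀ ∧
      ∃ f : Xε ε, ‖f‖ ≤ 3 ∧ ∀ y, 1 ≤ ‖f - (ContinuousLinearMap.id ℝ (Xε ε) + Tε ε) y‖ :=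
    fun _ => ((not_eventually.1 h).and_eventually (hlow.and (Ioc_mem_nhdsGT hε₀))).mono
      fun ε ⟨hns, hlowε, hε⟩ =>
        ⟨hε.2, exists_norm_le_forall_one_le_norm_sub_apply _ hc hlowε hns⟩
  obtain ⟨e, he0, he⟩ := exists_seq_tendsto_zero_of_frequently_nhdsGT hfreq
  choose hpos hle f hf hfar using he
  obtain ⟨n, y, hy⟩ := hT.exists_norm_sub_apply_lt_one hsurj (fun n => ⟨hpos n, hle n⟩) he0 f hf
  exact (hfar n y).not_gt hy

end CompactlyConverges

end CompactConvergence

theorem stmt_6_general (X : Type*) [NormedAddCommGroup X] [NormedSpace ℝ X]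
    (ε₀ : ℝ) (hε₀ : 0 < ε₀)
    (Xε : ℝ → Type*) [∀ ε, NormedAddCommGroup (Xε ε)] [∀ ε, NormedSpace ℝ (Xε ε)]
    [∀ ε, CompleteSpace (Xε ε)]
    (E : ∀ ε, X →L[ℝ] Xε ε)
    (hE : ∀ u : X, Tendsto (fun ε => ‖E ε u‖) (𝓝[>] 0) (𝓝 ‖u‖))
    (Tε : ∀ ε, Xε ε →L[ℝ] Xε ε) (T : X →L[ℝ] X)
    -- compact convergence, part 1: E-precompactness of images of bounded families
    (hprecomp : ∀ (e : ℕ → ℝ), (∀ n, e n ∈ Set.Ioc (0 : ℝ) ε₀) →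
      Tendsto e atTop (𝓝 0) →
      ∀ (u : ∀ n, Xε (e n)) (M : ℝ), (∀ n, ‖u n‖ ≤ M) →
        ∃ (φ : ℕ → ℕ) (v : X), StrictMono φ ∧
          Tendsto (fun n => ‖Tε (e (φ n)) (u (φ n)) - E (e (φ n)) v‖) atTop (𝓝 0))
    -- compact convergence, part 2: EE-convergence
    (hEE : ∀ (e : ℕ → ℝ), (∀ n, e n ∈ Set.Ioc (0 : ℝ) ε₀) →
      Tendsto e atTop (𝓝 0) →
      ∀ (u : ∀ n, Xε (e n)) (v : X),
        Tendsto (fun n => ‖u n - E (e n) v‖) atTop (𝓝 0) →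
        Tendsto (fun n => ‖Tε (e n) (u n) - E (e n) (T v)‖) atTop (𝓝 0))
    -- I + T injective with bounded inverse
    (hinv : ∃ S : X →L[ℝ] X,
      (∀ x, S ((ContinuousLinearMap.id ℝ X + T) x) = x) ∧
      (∀ x, (ContinuousLinearMap.id ℝ X + T) (S x) = x)) :
    ∃ ε₁ > (0 : ℝ), ∃ M > (0 : ℝ), ∀ ε ∈ Set.Ioc (0 : ℝ) ε₁,
      ∃ S : Xε ε →L[ℝ] Xε ε,
        (∀ x, S ((ContinuousLinearMap.id ℝ (Xε ε) + Tε ε) x) = x) ∧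
        (∀ x, (ContinuousLinearMap.id ℝ (Xε ε) + Tε ε) (S x) = x) ∧ ‖S‖ ≤ M := by
  obtain ⟨S, hS_left, hS_right⟩ := hinv
  have hT : CompactlyConverges ε₀ E Tε T := ⟨hprecomp, hEE⟩
  obtain ⟨c, hc, hlow⟩ := hT.exists_eventually_mul_norm_le hε₀ hE (LeftInverse.injective hS_left)
  have hsurj := hT.eventually_surjective hε₀ (RightInverse.surjective hS_right) hc hlow
  obtain ⟨ε₁, hε₁, hsmall⟩ := mem_nhdsGT_iff_exists_Ioc_subset.1 (hlow.and hsurj)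
  refine ⟨ε₁, hε₁, c⁻¹, inv_pos.2 hc, fun ε hε => ?_⟩
  obtain ⟨hlowε, hsurjε⟩ := hsmall hε
  exact exists_inverse_of_mul_norm_le_of_surjective _ hc hlowε hsurjε

/-- If `T_ε` converges compactly to `T` (E-precompactness of images of bounded families and
EE-convergence), and `I + T` has a bounded inverse on `X`, then for all small `ε` the
operators `I + T_ε` are invertible with uniformly bounded inverses. -/
theorem stmt_6 (X : Type*) [NormedAddCommGroup X] [NormedSpace ℝ X] [CompleteSpace X]
    (ε₀ : ℝ) (hε₀ : 0 < ε₀)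
    (Xε : ℝ → Type*) [∀ ε, NormedAddCommGroup (Xε ε)] [∀ ε, NormedSpace ℝ (Xε ε)]
    [∀ ε, CompleteSpace (Xε ε)]
    (E : ∀ ε, X →L[ℝ] Xε ε)
    (hE : ∀ u : X, Tendsto (fun ε => ‖E ε u‖) (𝓝[>] 0) (𝓝 ‖u‖))
    (Tε : ∀ ε, Xε ε →L[ℝ] Xε ε) (T : X →L[ℝ] X)
    -- compact convergence, part 1: E-precompactness of images of bounded families
    (hprecomp : ∀ (e : ℕ → ℝ), (∀ n, e n ∈ Set.Ioc (0 : ℝ) ε₀) →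
      Tendsto e atTop (𝓝 0) →
      ∀ (u : ∀ n, Xε (e n)) (M : ℝ), (∀ n, ‖u n‖ ≤ M) →
        ∃ (φ : ℕ → ℕ) (v : X), StrictMono φ ∧
          Tendsto (fun n => ‖Tε (e (φ n)) (u (φ n)) - E (e (φ n)) v‖) atTop (𝓝 0))
    -- compact convergence, part 2: EE-convergence
    (hEE : ∀ (e : ℕ → ℝ), (∀ n, e n ∈ Set.Ioc (0 : ℝ) ε₀) →
      Tendsto e atTop (𝓝 0) →
      ∀ (u : ∀ n, Xε (e n)) (v : X),
        Tendsto (fun n => ‖u n - E (e n) v‖) atTop (𝓝 0) →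
        Tendsto (fun n => ‖Tε (e n) (u n) - E (e n) (T v)‖) atTop (𝓝 0))
    -- I + T injective with bounded inverse
    (hinv : ∃ S : X →L[ℝ] X,
      (∀ x, S ((ContinuousLinearMap.id ℝ X + T) x) = x) ∧
      (∀ x, (ContinuousLinearMap.id ℝ X + T) (S x) = x)) :
    ∃ ε₁ > (0 : ℝ), ∃ M > (0 : ℝ), ∀ ε ∈ Set.Ioc (0 : ℝ) ε₁,
      ∃ S : Xε ε →L[ℝ] Xε ε,
        (∀ x, S ((ContinuousLinearMap.id ℝ (Xε ε) + Tε ε) x) = x) ∧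
        (∀ x, (ContinuousLinearMap.id ℝ (Xε ε) + Tε ε) (S x) = x) ∧ ‖S‖ ≤ M :=
  stmt_6_general X ε₀ hε₀ Xε E hE Tε T hprecomp hEE hinv
end

section
/- Let H, H_ε be Hilbert spaces, A : X^{1/2} → X^{−1/2} and A_ε : X_ε^{1/2} → X_ε^{−1/2} bounded invertible operators given by coercive symmetric bilinear forms a, a_ε with a_ε(u,u) = ‖u‖²_{X_ε^{1/2}}. Suppose h_ε ∈ X_ε^{−1/2} with ‖h_ε‖ ≤ K uniformly, v_ε = A_ε^{−1} h_ε, and along a sequence ε_k → 0: (i) v_{ε_k} E-weakly converges to some v₀ ∈ X^{1/2}, (ii) ⟨h_{ε_k}, v_{ε_k}⟩ → ⟨h₀, v₀⟩ for some h₀ ∈ X^{−1/2}, and (iii) ⟨h_{ε_k}, E_{ε_k} w⟩ → ⟨h₀, w⟩ for all w ∈ X^{1/2}, where the pairings with E-convergent test functions recover the limit form. Then v₀ = A^{−1} h₀ and ‖v_{ε_k}‖²_{X_{ε_k}^{1/2}} → ‖v₀‖²_{X^{1/2}}, hence v_{ε_k} E-converges (strongly) to A^{−1} h₀. -/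
open Filter Topology

/-
The limit identity `h₀ = ⟪v₀, ·⟫` comes from testing the equation `h_k = ⟪v_k, ·⟫` against
`E_k w` and comparing the two limits. Applied to `w = v₀`, it turns the energy convergence
`h_k v_k → h₀ v₀` into `‖v_k‖² → ‖v₀‖²`. Expanding
`‖v_k - E_k v₀‖² = ‖v_k‖² - 2⟪v_k, E_k v₀⟫ + ‖E_k v₀‖²`, the three terms tend to
`‖v₀‖²`, `2‖v₀‖²` and `‖v₀‖²`, so weak convergence plus convergence of norms is strong convergence.
-/

theorem tendsto_norm_sub_zero_of_tendsto_inner {ι : Type*} {l : Filter ι} {H : ι → Type*}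
    [∀ i, NormedAddCommGroup (H i)] [∀ i, InnerProductSpace ℝ (H i)] {u e : ∀ i, H i} {s : ℝ}
    (hu : Tendsto (fun i => ‖u i‖ ^ 2) l (𝓝 s)) (he : Tendsto (fun i => ‖e i‖ ^ 2) l (𝓝 s))
    (hue : Tendsto (fun i => inner ℝ (u i) (e i)) l (𝓝 s)) :
    Tendsto (fun i => ‖u i - e i‖) l (𝓝 0) := by
  have hsq : Tendsto (fun i => ‖u i - e i‖ ^ 2) l (𝓝 0) := by
    have hlim := (hu.sub (hue.const_mul 2)).add he
    rw [show s - 2 * s + s = 0 by ring] at hlim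
    exact hlim.congr fun i => (norm_sub_sq_real (u i) (e i)).symm
  simpa only [Real.sqrt_sq (norm_nonneg _), Real.sqrt_zero] using hsq.sqrt

theorem stmt_9_general (X : Type*) [NormedAddCommGroup X] [InnerProductSpace ℝ X]
    (Hk : ℕ → Type*) [∀ k, NormedAddCommGroup (Hk k)] [∀ k, InnerProductSpace ℝ (Hk k)]
    (E : ∀ k, X →L[ℝ] Hk k)
    (hE : ∀ u : X, Tendsto (fun k => ‖E k u‖) atTop (𝓝 ‖u‖))
    (h : ∀ k, Hk k →L[ℝ] ℝ)
    (v : ∀ k, Hk k) (hv : ∀ k, ∀ w : Hk k, h k w = inner ℝ (v k) w)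
    (h₀ : X →L[ℝ] ℝ) (v₀ : X)
    (hweak : ∀ w : X,
      Tendsto (fun k => (inner ℝ (v k) (E k w) : ℝ)) atTop (𝓝 (inner ℝ v₀ w : ℝ)))
    (hpair : Tendsto (fun k => h k (v k)) atTop (𝓝 (h₀ v₀)))
    (htest : ∀ w : X, Tendsto (fun k => h k (E k w)) atTop (𝓝 (h₀ w))) :
    (∀ w : X, h₀ w = inner ℝ v₀ w) ∧
    Tendsto (fun k => ‖v k‖ ^ 2) atTop (𝓝 (‖v₀‖ ^ 2)) ∧
    Tendsto (fun k => ‖v k - E k v₀‖) atTop (𝓝 0) := by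
  have hident : ∀ w : X, h₀ w = inner ℝ v₀ w := fun w =>
    tendsto_nhds_unique (htest w) (by simpa only [hv] using hweak w)
  have hnorm : Tendsto (fun k => ‖v k‖ ^ 2) atTop (𝓝 (‖v₀‖ ^ 2)) := by
    simpa only [hv, hident, real_inner_self_eq_norm_sq] using hpair
  refine ⟨hident, hnorm, tendsto_norm_sub_zero_of_tendsto_inner hnorm ((hE v₀).pow 2) ?_⟩
  simpa only [real_inner_self_eq_norm_sq] using hweak v₀

/-- Variational convergence: if `A_ε v_ε = h_ε` in the sense `⟨h_ε, w⟩ = ⟪v_ε, w⟫`, the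
`v_{ε_k}` E-weakly converge to `v₀`, the energies `⟨h_{ε_k}, v_{ε_k}⟩` converge to
`⟨h₀, v₀⟩`, and the pairings against `E_{ε_k} w` converge to `⟨h₀, w⟩`, then `v₀ = A⁻¹ h₀`,
the norms converge, and `v_{ε_k}` E-converges strongly to `A⁻¹ h₀`.  (The sequence
`ε_k → 0` is used as the index.) -/
theorem stmt_9 (X : Type*) [NormedAddCommGroup X] [InnerProductSpace ℝ X]
    (Hk : ℕ → Type*) [∀ k, NormedAddCommGroup (Hk k)] [∀ k, InnerProductSpace ℝ (Hk k)]
    (E : ∀ k, X →L[ℝ] Hk k)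
    (hE : ∀ u : X, Tendsto (fun k => ‖E k u‖) atTop (𝓝 ‖u‖))
    (K : ℝ)
    (h : ∀ k, Hk k →L[ℝ] ℝ) (hbdd : ∀ k, ‖h k‖ ≤ K)
    (v : ∀ k, Hk k) (hv : ∀ k, ∀ w : Hk k, h k w = inner ℝ (v k) w)
    (h₀ : X →L[ℝ] ℝ) (v₀ : X)
    (hweak : ∀ w : X,
      Tendsto (fun k => (inner ℝ (v k) (E k w) : ℝ)) atTop (𝓝 (inner ℝ v₀ w : ℝ)))
    (hpair : Tendsto (fun k => h k (v k)) atTop (𝓝 (h₀ v₀)))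
    (htest : ∀ w : X, Tendsto (fun k => h k (E k w)) atTop (𝓝 (h₀ w))) :
    (∀ w : X, h₀ w = inner ℝ v₀ w) ∧
    Tendsto (fun k => ‖v k‖ ^ 2) atTop (𝓝 (‖v₀‖ ^ 2)) ∧
    Tendsto (fun k => ‖v k - E k v₀‖) atTop (𝓝 0) :=
  stmt_9_general X Hk E hE h v hv h₀ v₀ hweak hpair htest
end

section
/- Let Y be a Banach space and T : Y → Y a compact operator such that I + T is injective. Then I + T is bijective with bounded inverse (Fredholm alternative), and moreover for any family of Banach spaces Y_ε with asymptotically norm-preserving operators E_ε : Y → Y_ε and compact operators T_ε : Y_ε → Y_ε converging compactly to T, the kernels ker(I + T_ε) are trivial for all sufficiently small ε. -/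
/-!
Since `I + T` is injective, `-1` is not an eigenvalue of the compact operator `T`, so by the
Fredholm alternative it lies in the resolvent set. If the kernels of `I + T_ε` were nontrivial
for arbitrarily small `ε`, normalised kernel vectors `u_n` would satisfy `T_{ε_n} u_n = -u_n`.
Compact convergence yields a subsequence `E`-converging to some `y`, along which `u_n` also
`E`-converges to `-T(-y) = T y`; uniqueness of `E`-limits gives `y + T y = 0`, hence `y = 0`,
contradicting `‖u_n‖ → ‖y‖` and `‖u_n‖ = 1`.
-/

open Filter Topology Set

open Module End in
theorem IsCompactOperator.isUnit_one_add {𝕜 X : Type*} [NontriviallyNormedField 𝕜]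
    [NormedAddCommGroup X] [NormedSpace 𝕜 X] [CompleteSpace X] {T : X →L[𝕜] X}
    (hT : IsCompactOperator T) (hinj : Function.Injective ⇑(1 + T)) : IsUnit (1 + T) := by
  have hμ : ¬ HasEigenvalue (T : End 𝕜 X) (-1) := fun h => by
    obtain ⟨x, hx⟩ := h.exists_hasEigenvector
    have hTx : T x = -x := by simpa using hx.apply_eq_smul
    exact hx.2 (hinj (by simp [hTx]))
  have := (hT.hasEigenvalue_or_mem_resolventSet (neg_ne_zero.2 one_ne_zero)).resolve_left hμ
  rw [spectrum.mem_resolventSet_iff] at this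
  simpa [sub_eq_add_neg, add_comm] using this.neg

section CompactConvergence

variable {Y : Type*} [NormedAddCommGroup Y] [NormedSpace ℝ Y]
  {Yε : ℝ → Type*} [∀ ε, NormedAddCommGroup (Yε ε)] [∀ ε, NormedSpace ℝ (Yε ε)]
  (E : ∀ ε, Y →L[ℝ] Yε ε)

/-- `E`-convergence of `u n ∈ Yε (e n)` to `y ∈ Y` along a sequence of parameters `e n`. -/
def ETendsto (e : ℕ → ℝ) (u : ∀ n, Yε (e n)) (y : Y) : Prop :=
  Tendsto (fun n => ‖u n - E (e n) y‖) atTop (𝓝 0)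

variable {E} {e : ℕ → ℝ} {u : ∀ n, Yε (e n)} {y y' : Y}

lemma ETendsto.neg (h : ETendsto E e u y) : ETendsto E e (fun n => -u n) (-y) := by
  simpa only [ETendsto, map_neg, sub_neg_eq_add, neg_add_eq_sub, norm_sub_rev] using h

lemma ETendsto.tendsto_norm (hE : ∀ y : Y, Tendsto (fun ε => ‖E ε y‖) (𝓝[>] 0) (𝓝 ‖y‖))
    (he : Tendsto e atTop (𝓝[>] 0)) (h : ETendsto E e u y) :
    Tendsto (fun n => ‖u n‖) atTop (𝓝 ‖y‖) := by
  have hdiff : Tendsto (fun n => ‖u n‖ - ‖E (e n) y‖) atTop (𝓝 0) :=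
    squeeze_zero_norm (fun n => abs_norm_sub_norm_le _ _) h
  simpa using hdiff.add ((hE y).comp he)

lemma ETendsto.unique (hE : ∀ y : Y, Tendsto (fun ε => ‖E ε y‖) (𝓝[>] 0) (𝓝 ‖y‖))
    (he : Tendsto e atTop (𝓝[>] 0)) (h : ETendsto E e u y) (h' : ETendsto E e u y') :
    y = y' := by
  have hbound : ∀ n, ‖E (e n) (y - y')‖ ≤ ‖u n - E (e n) y'‖ + ‖u n - E (e n) y‖ := fun n => by
    rw [map_sub, ← sub_sub_sub_cancel_left _ _ (u n)]
    exact norm_sub_le _ _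
  have hlim : Tendsto (fun n => ‖E (e n) (y - y')‖) atTop (𝓝 0) :=
    squeeze_zero (fun _ => norm_nonneg _) hbound (by simpa using h'.add h)
  exact sub_eq_zero.1 (norm_eq_zero.1 (tendsto_nhds_unique ((hE _).comp he) hlim))

variable (E) in
structure CompactlyConverges_s15 (Tε : ∀ ε, Yε ε →L[ℝ] Yε ε) (T : Y →L[ℝ] Y) (ε₀ : ℝ) : Prop where
  precompact : ∀ e : ℕ → ℝ, (∀ n, e n ∈ Ioc 0 ε₀) → Tendsto e atTop (𝓝 0) →
    ∀ (u : ∀ n, Yε (e n)) (M : ℝ), (∀ n, ‖u n‖ ≤ M) →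
      ∃ (φ : ℕ → ℕ) (y : Y), StrictMono φ ∧
        ETendsto E (fun n => e (φ n)) (fun n => Tε (e (φ n)) (u (φ n))) y
  tendsto_apply : ∀ e : ℕ → ℝ, (∀ n, e n ∈ Ioc 0 ε₀) → Tendsto e atTop (𝓝 0) →
    ∀ (u : ∀ n, Yε (e n)) (y : Y), ETendsto E e u y → ETendsto E e (fun n => Tε (e n) (u n)) (T y)

variable {Tε : ∀ ε, Yε ε →L[ℝ] Yε ε} {T : Y →L[ℝ] Y} {ε₀ : ℝ}

theorem CompactlyConverges_s15.exists_subseq_tendsto_zero_of_apply_eq_neg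
    (hTε : CompactlyConverges_s15 E Tε T ε₀)
    (hinj : Function.Injective (ContinuousLinearMap.id ℝ Y + T))
    (hE : ∀ y : Y, Tendsto (fun ε => ‖E ε y‖) (𝓝[>] 0) (𝓝 ‖y‖))
    (he : ∀ n, e n ∈ Ioc 0 ε₀) (he0 : Tendsto e atTop (𝓝 0)) (hu : ∀ n, ‖u n‖ ≤ 1)
    (hker : ∀ n, Tε (e n) (u n) = -u n) :
    ∃ φ : ℕ → ℕ, StrictMono φ ∧ Tendsto (fun n => ‖u (φ n)‖) atTop (𝓝 0) := by
  obtain ⟨φ, y, hφ, hTu⟩ := hTε.precompact e he he0 u 1 hu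
  have he' : ∀ n, e (φ n) ∈ Ioc 0 ε₀ := fun n => he (φ n)
  have he0' : Tendsto (fun n => e (φ n)) atTop (𝓝 0) := he0.comp hφ.tendsto_atTop
  have he0'' : Tendsto (fun n => e (φ n)) atTop (𝓝[>] 0) :=
    tendsto_nhdsWithin_iff.2 ⟨he0', .of_forall fun n => (he' n).1⟩
  have hlim : ETendsto E (fun n => e (φ n)) (fun n => u (φ n)) (-y) := by
    simpa only [hker, neg_neg] using hTu.neg
  have hlim' : ETendsto E (fun n => e (φ n)) (fun n => u (φ n)) (T y) := by
    simpa only [hker, neg_neg, map_neg] using (hTε.tendsto_apply _ he' he0' _ _ hlim).neg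
  have hTy : T y = -y := (hlim.unique hE he0'' hlim').symm
  have hy : y = 0 := hinj (by simp [hTy])
  refine ⟨φ, hφ, ?_⟩
  simpa [hy] using hlim.tendsto_norm hE he0''

theorem CompactlyConverges_s15.eventually_ker_trivial
    (hTε : CompactlyConverges_s15 E Tε T ε₀) (hε₀ : 0 < ε₀)
    (hinj : Function.Injective (ContinuousLinearMap.id ℝ Y + T))
    (hE : ∀ y : Y, Tendsto (fun ε => ‖E ε y‖) (𝓝[>] 0) (𝓝 ‖y‖)) :
    ∃ ε₁ > (0 : ℝ), ∀ ε ∈ Ioc (0 : ℝ) ε₁,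
      ∀ x : Yε ε, (ContinuousLinearMap.id ℝ (Yε ε) + Tε ε) x = 0 → x = 0 := by
  by_contra! h
  have hsmall (n : ℕ) : ∃ ε ∈ Ioc 0 (min ε₀ (1 / ((n : ℝ) + 1))), ∃ x : Yε ε,
      Tε ε x = -x ∧ x ≠ 0 := by
    obtain ⟨ε, hε, x, hx, hx0⟩ := h _ (lt_min hε₀ Nat.one_div_pos_of_nat)
    exact ⟨ε, hε, x, eq_neg_of_add_eq_zero_right (by simpa using hx), hx0⟩
  choose e he x hx hx0 using hsmall
  have he0 : Tendsto e atTop (𝓝 0) :=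
    squeeze_zero (fun n => (he n).1.le) (fun n => (he n).2.trans (min_le_right _ _))
      tendsto_one_div_add_atTop_nhds_zero_nat
  have hunit (n : ℕ) : ‖‖x n‖⁻¹ • x n‖ = 1 := norm_smul_inv_norm (hx0 n)
  obtain ⟨φ, -, hφ⟩ := hTε.exists_subseq_tendsto_zero_of_apply_eq_neg hinj hE
    (fun n => ⟨(he n).1, (he n).2.trans (min_le_left _ _)⟩) he0 (fun n => (hunit n).le)
    (fun n => by rw [map_smul, hx, smul_neg])
  simp only [hunit] at hφ
  exact one_ne_zero (tendsto_nhds_unique tendsto_const_nhds hφ)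

end CompactConvergence

theorem stmt_15_general (Y : Type*) [NormedAddCommGroup Y] [NormedSpace ℝ Y] [CompleteSpace Y]
    (T : Y →L[ℝ] Y) (hTcomp : IsCompactOperator T)
    (hinj : Function.Injective (ContinuousLinearMap.id ℝ Y + T))
    (ε₀ : ℝ) (hε₀ : 0 < ε₀)
    (Yε : ℝ → Type*) [∀ ε, NormedAddCommGroup (Yε ε)] [∀ ε, NormedSpace ℝ (Yε ε)]
    (E : ∀ ε, Y →L[ℝ] Yε ε)
    (hE : ∀ u : Y, Tendsto (fun ε => ‖E ε u‖) (𝓝[>] 0) (𝓝 ‖u‖))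
    (Tε : ∀ ε, Yε ε →L[ℝ] Yε ε)
    -- compact convergence, part 1: E-precompactness of images of bounded families
    (hprecomp : ∀ (e : ℕ → ℝ), (∀ n, e n ∈ Set.Ioc (0 : ℝ) ε₀) →
      Tendsto e atTop (𝓝 0) →
      ∀ (u : ∀ n, Yε (e n)) (M : ℝ), (∀ n, ‖u n‖ ≤ M) →
        ∃ (φ : ℕ → ℕ) (y : Y), StrictMono φ ∧
          Tendsto (fun n => ‖Tε (e (φ n)) (u (φ n)) - E (e (φ n)) y‖) atTop (𝓝 0))
    -- compact convergence, part 2: EE-convergence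
    (hEE : ∀ (e : ℕ → ℝ), (∀ n, e n ∈ Set.Ioc (0 : ℝ) ε₀) →
      Tendsto e atTop (𝓝 0) →
      ∀ (u : ∀ n, Yε (e n)) (y : Y),
        Tendsto (fun n => ‖u n - E (e n) y‖) atTop (𝓝 0) →
        Tendsto (fun n => ‖Tε (e n) (u n) - E (e n) (T y)‖) atTop (𝓝 0)) :
    (∃ S : Y →L[ℝ] Y,
      (∀ y, S ((ContinuousLinearMap.id ℝ Y + T) y) = y) ∧
      (∀ y, (ContinuousLinearMap.id ℝ Y + T) (S y) = y)) ∧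
    ∃ ε₁ > (0 : ℝ), ∀ ε ∈ Set.Ioc (0 : ℝ) ε₁,
      ∀ x : Yε ε, (ContinuousLinearMap.id ℝ (Yε ε) + Tε ε) x = 0 → x = 0 := by
  refine ⟨?_, CompactlyConverges_s15.eventually_ker_trivial ⟨hprecomp, hEE⟩ hε₀ hinj hE⟩
  obtain ⟨A, hA⟩ := hTcomp.isUnit_one_add hinj
  have hA' : (A : Y →L[ℝ] Y) = ContinuousLinearMap.id ℝ Y + T := hA
  exact ⟨↑A⁻¹, fun y => by rw [← hA']; exact DFunLike.congr_fun A.inv_mul y,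
    fun y => by rw [← hA']; exact DFunLike.congr_fun A.mul_inv y⟩

/-- Fredholm alternative and stability of trivial kernels under compact convergence: if
`T` is compact and `I + T` is injective, then `I + T` has a bounded two-sided inverse, and
for any family of compact operators `T_ε` converging compactly to `T` (via asymptotically
norm-preserving operators `E_ε`), the kernels `ker(I + T_ε)` are trivial for small `ε`. -/
theorem stmt_15 (Y : Type*) [NormedAddCommGroup Y] [NormedSpace ℝ Y] [CompleteSpace Y]
    (T : Y →L[ℝ] Y) (hTcomp : IsCompactOperator T)
    (hinj : Function.Injective (ContinuousLinearMap.id ℝ Y + T))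
    (ε₀ : ℝ) (hε₀ : 0 < ε₀)
    (Yε : ℝ → Type*) [∀ ε, NormedAddCommGroup (Yε ε)] [∀ ε, NormedSpace ℝ (Yε ε)]
    [∀ ε, CompleteSpace (Yε ε)]
    (E : ∀ ε, Y →L[ℝ] Yε ε)
    (hE : ∀ u : Y, Tendsto (fun ε => ‖E ε u‖) (𝓝[>] 0) (𝓝 ‖u‖))
    (Tε : ∀ ε, Yε ε →L[ℝ] Yε ε) (hTε : ∀ ε, IsCompactOperator (Tε ε))
    -- compact convergence, part 1: E-precompactness of images of bounded families
    (hprecomp : ∀ (e : ℕ → ℝ), (∀ n, e n ∈ Set.Ioc (0 : ℝ) ε₀) →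
      Tendsto e atTop (𝓝 0) →
      ∀ (u : ∀ n, Yε (e n)) (M : ℝ), (∀ n, ‖u n‖ ≤ M) →
        ∃ (φ : ℕ → ℕ) (y : Y), StrictMono φ ∧
          Tendsto (fun n => ‖Tε (e (φ n)) (u (φ n)) - E (e (φ n)) y‖) atTop (𝓝 0))
    -- compact convergence, part 2: EE-convergence
    (hEE : ∀ (e : ℕ → ℝ), (∀ n, e n ∈ Set.Ioc (0 : ℝ) ε₀) →
      Tendsto e atTop (𝓝 0) →
      ∀ (u : ∀ n, Yε (e n)) (y : Y),
        Tendsto (fun n => ‖u n - E (e n) y‖) atTop (𝓝 0) →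
        Tendsto (fun n => ‖Tε (e n) (u n) - E (e n) (T y)‖) atTop (𝓝 0)) :
    (∃ S : Y →L[ℝ] Y,
      (∀ y, S ((ContinuousLinearMap.id ℝ Y + T) y) = y) ∧
      (∀ y, (ContinuousLinearMap.id ℝ Y + T) (S y) = y)) ∧
    ∃ ε₁ > (0 : ℝ), ∀ ε ∈ Set.Ioc (0 : ℝ) ε₁,
      ∀ x : Yε ε, (ContinuousLinearMap.id ℝ (Yε ε) + Tε ε) x = 0 → x = 0 :=
  stmt_15_general Y T hTcomp hinj ε₀ hε₀ Yε E hE Tε hprecomp hEE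
end
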